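/- arXiv:1007.3804 — 7 statements merged into one kernel-verified Lean document; each statement's English description precedes it below -/
import Mathlib

section
/- There is no 2×2 matrix M over a field k of characteristic 0, each of whose entries is either a constant of k or one of the variables x, y, such that det(M) = 2xy in k[x,y]. -/
open MvPolynomial

/-- There is no 2×2 matrix, each of whose entries is a constant of a field `k`
of characteristic zero or one of the variables `x`, `y`, whose determinant is
`2xy`. -/
theorem no_two_by_two_rep_two_xy {k : Type*} [Field k] [CharZero k]
    (M : Matrix (Fin 2) (Fin 2) (MvPolynomial (Fin 2) k))
    (hM : ∀ i j, (∃ c : k, M i j = C c) ∨ M i j = X 0 ∨ M i j = X 1) :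
    M.det ≠ 2 * X 0 * X 1 := by
  intro h
  have h2 := congrArg (fun p => Polynomial.coeff
    (MvPolynomial.aeval (fun _ : Fin 2 => (Polynomial.X : Polynomial k)) p) 2) h
  simp only [Matrix.det_fin_two] at h2
  rcases hM 0 0 with ⟨a, ha⟩ | ha | ha <;>
  rcases hM 0 1 with ⟨b, hb⟩ | hb | hb <;>
  rcases hM 1 0 with ⟨c, hc⟩ | hc | hc <;>
  rcases hM 1 1 with ⟨d, hd⟩ | hd | hd <;>
  · simp only [ha, hb, hc, hd, map_sub, map_mul, map_ofNat, aeval_X, aeval_C,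
      Polynomial.algebraMap_eq, Polynomial.coeff_sub, Polynomial.coeff_ofNat_mul,
      Polynomial.coeff_C_mul, Polynomial.coeff_mul_C, ← sq,
      Polynomial.coeff_X_pow, Polynomial.coeff_X, Polynomial.coeff_C] at h2
    norm_num at h2
end

section
/- Over a field k of characteristic 2, there is no symmetric matrix M (of any dimension) whose entries are affine-linear forms in the variables x, y, z over k such that det(M) = xy + z in k[x,y,z]. -/
/-!
In characteristic 2 the determinant of a symmetric matrix is a sum over involutions, and the term
of an involution is the product of the diagonal entries at its fixed points and of the squares of
the entries at its 2-cycles. Modulo the ideal `(x², y², z²)` the square of a polynomial is the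
square of its constant term, so modulo that ideal `det M` only depends on the diagonal of `M` and
on the constant terms of its off-diagonal entries.

If `det M = xy + z`, then `M(0)` is singular, and a congruence `M ↦ RᵀMR` by an invertible
constant matrix makes a column of `M(0)` vanish. Replacing the off-diagonal entries by their
constant terms then leaves a matrix whose `p`-th column is `l • eₚ` with `l` a linear form, so
`det R ^ 2 • (xy + z) ≡ l * K`. The coefficients of `x`, `y`, `z` and `xy` survive modulo the
ideal, and comparing them forces `det R = 0`.
-/

open MvPolynomial Finset Equiv
open scoped Matrix

theorem Ideal.pow_mem_span_image_pow {R : Type*} [CommRing R] {p : ℕ} [ExpChar R p]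
    {s : Set R} {x : R} (hx : x ∈ Ideal.span s) : x ^ p ∈ Ideal.span ((· ^ p) '' s) := by
  induction hx using Submodule.span_induction with
  | mem y hy => exact Ideal.subset_span ⟨y, hy, rfl⟩
  | zero => rw [zero_pow (expChar_pos R p).ne']; exact zero_mem _
  | add y z _ _ hy hz => rw [add_pow_expChar]; exact add_mem hy hz
  | smul r y _ hy => rw [smul_eq_mul, mul_pow]; exact Ideal.mul_mem_left _ _ hy

theorem Function.Involutive.prod_eq_prod_fixed_mul_sq {ι M : Type*} [LinearOrder ι] [Fintype ι]
    [CommMonoid M] {σ : ι → ι} (hσ : Function.Involutive σ) {f : ι → M}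
    (hf : ∀ i, f (σ i) = f i) :
    ∏ i, f i = (∏ i ∈ univ.filter (fun i => σ i = i), f i) *
      (∏ i ∈ univ.filter (fun i => i < σ i), f i) ^ 2 := by
  have hswap : ∏ i ∈ univ.filter (fun i => σ i < i), f i =
      ∏ i ∈ univ.filter (fun i => i < σ i), f i :=
    prod_equiv hσ.toPerm (fun i => by simp [hσ i]) (fun i _ => by simp [hf])
  rw [← prod_filter_mul_prod_filter_not univ (fun i => σ i = i),
    ← prod_filter_mul_prod_filter_not (univ.filter fun i => ¬σ i = i) (fun i => i < σ i),
    filter_filter, filter_filter,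
    filter_congr (p := fun i => ¬σ i = i ∧ i < σ i) (q := fun i => i < σ i)
      (fun i _ => ⟨And.right, fun h => ⟨h.ne', h⟩⟩),
    filter_congr (p := fun i => ¬σ i = i ∧ ¬i < σ i) (q := fun i => σ i < i)
      (fun i _ => ⟨fun h => lt_of_le_of_ne (not_lt.1 h.2) h.1,
        fun h => ⟨h.ne, not_lt.2 h.le⟩⟩),
    hswap, sq]

theorem Matrix.IsSymm.prod_apply_eq_of_sq_eq {R ι : Type*} [CommMonoid R] [Fintype ι]
    {A B : Matrix ι ι R} (hA : A.IsSymm) (hB : B.IsSymm) (hdiag : ∀ i, A i i = B i i)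
    (hsq : ∀ i j, i ≠ j → A i j ^ 2 = B i j ^ 2) {σ : ι → ι}
    (hσ : Function.Involutive σ) : ∏ i, A (σ i) i = ∏ i, B (σ i) i := by
  -- any order will do: it only selects one point from each 2-cycle of `σ`
  let _ : LinearOrder ι := LinearOrder.lift' _ (Fintype.equivFin ι).injective
  rw [hσ.prod_eq_prod_fixed_mul_sq (fun i => by rw [hσ i]; exact hA.apply _ _),
    hσ.prod_eq_prod_fixed_mul_sq (fun i => by rw [hσ i]; exact hB.apply _ _),
    ← prod_pow, ← prod_pow]
  congr 1
  · refine prod_congr rfl fun i hi => ?_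
    rw [(mem_filter.1 hi).2, hdiag]
  · exact prod_congr rfl fun i hi => hsq _ _ (mem_filter.1 hi).2.ne'

section CharTwo

variable {R ι : Type*} [CommRing R] [CharP R 2] [Fintype ι] [DecidableEq ι]

theorem Matrix.IsSymm.det_eq_sum_involutions {A : Matrix ι ι R} (hA : A.IsSymm) :
    A.det = ∑ σ ∈ univ.filter (fun σ : Perm ι => σ⁻¹ = σ), ∏ i, A (σ i) i := by
  have hsign : ∀ (u : ℤˣ) (x : R), u • x = x := fun u x => by
    rcases Int.units_eq_one_or u with rfl | rfl <;> simp [CharTwo.neg_eq]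
  have hprod_inv : ∀ σ : Perm ι, ∏ i, A (σ⁻¹ i) i = ∏ i, A (σ i) i := fun σ =>
    calc ∏ i, A (σ⁻¹ i) i = ∏ i, A (σ⁻¹ (σ i)) (σ i) :=
          (Equiv.prod_comp σ fun i => A (σ⁻¹ i) i).symm
      _ = ∏ i, A (σ i) i := by simpa using prod_congr rfl fun i _ => hA.apply (σ i) i
  have hcancel :
      ∑ σ ∈ univ.filter (fun σ : Perm ι => ¬σ⁻¹ = σ), ∏ i, A (σ i) i = 0 :=
    sum_involution (fun σ _ => σ⁻¹) (fun σ _ => by rw [hprod_inv, CharTwo.add_self_eq_zero])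
      (fun σ hσ _ => (mem_filter.1 hσ).2) (fun σ hσ => by simpa [eq_comm] using hσ)
      (fun σ _ => inv_inv σ)
  rw [Matrix.det_apply, ← sum_filter_add_sum_filter_not univ (fun σ : Perm ι => σ⁻¹ = σ)]
  simp only [hsign, hcancel, add_zero]

theorem Matrix.IsSymm.det_eq_of_sq_eq {A B : Matrix ι ι R} (hA : A.IsSymm) (hB : B.IsSymm)
    (hdiag : ∀ i, A i i = B i i) (hsq : ∀ i j, i ≠ j → A i j ^ 2 = B i j ^ 2) :
    A.det = B.det := by
  rw [hA.det_eq_sum_involutions, hB.det_eq_sum_involutions]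
  refine sum_congr rfl fun σ hσ => hA.prod_apply_eq_of_sq_eq hB hdiag hsq fun i => ?_
  simpa using congrArg (fun τ : Perm ι => τ (σ i)) (mem_filter.1 hσ).2.symm

end CharTwo

theorem Matrix.exists_det_ne_zero_mul_apply_eq_zero {K n : Type*} [CommRing K] [IsDomain K]
    [Fintype n] [DecidableEq n] {C : Matrix n n K} (hC : C.det = 0) :
    ∃ (R : Matrix n n K) (p : n), R.det ≠ 0 ∧ ∀ i, (C * R) i p = 0 := by
  obtain ⟨u, hu, hCu⟩ := Matrix.exists_mulVec_eq_zero_iff.2 hC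
  obtain ⟨p, hp⟩ := Function.ne_iff.1 hu
  refine ⟨(1 : Matrix n n K).updateCol p u, p, ?_, fun i => ?_⟩
  · rwa [← Matrix.cramer_apply, Matrix.cramer_one]
  · simpa [Matrix.mul_apply, Matrix.updateCol_apply, Matrix.mulVec, dotProduct] using
      congrFun hCu i

theorem Matrix.transpose_map_mul_mul_map_apply_mem {k S n : Type*} [CommSemiring k] [Semiring S]
    [Algebra k S] [Fintype n] (W : Submodule k S) (R : Matrix n n k) {M : Matrix n n S}
    (hM : ∀ i j, M i j ∈ W) (i j : n) :
    ((R.map (algebraMap k S))ᵀ * M * R.map (algebraMap k S)) i j ∈ W := by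
  simp only [Matrix.mul_apply, Matrix.transpose_apply, Matrix.map_apply, ← Algebra.commutes,
    ← Algebra.smul_def]
  exact W.sum_mem fun b _ => W.smul_mem _ (W.sum_mem fun a _ => W.smul_mem _ (hM a b))

theorem Matrix.dvd_det_of_col_eq_zero {R n : Type*} [CommRing R] [Fintype n] [DecidableEq n]
    {N : Matrix n n R} {p : n} (h : ∀ i, i ≠ p → N i p = 0) : N p p ∣ N.det := by
  have hcol : (fun i => N i p) = N p p • Pi.single p 1 := by
    ext i
    by_cases hi : i = p
    · simp [hi]
    · simp [hi, h i hi]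
  refine ⟨(N.updateCol p (Pi.single p 1)).det, ?_⟩
  conv_lhs => rw [← N.updateCol_eq_self p, hcol]
  exact Matrix.det_updateCol_smul _ _ _ _

theorem MvPolynomial.eq_C_add_sum_C_mul_X_of_totalDegree_le_one {σ R : Type*} [Fintype σ]
    [CommSemiring R] {f : MvPolynomial σ R} (hf : f.totalDegree ≤ 1) :
    f = C (coeff 0 f) + ∑ i, C (coeff (Finsupp.single i 1) f) * X i := by
  classical
  ext m
  simp only [coeff_add, coeff_C, coeff_sum, coeff_C_mul, coeff_X]
  rcases Nat.lt_or_ge 1 (m.sum fun _ n => n) with hm | hm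
  · have h0 : (0 : σ →₀ ℕ) ≠ m := by rintro rfl; simp at hm
    have h1 : ∀ i, Finsupp.single i 1 ≠ m := by rintro i rfl; simp at hm
    rw [coeff_eq_zero_of_totalDegree_lt (hf.trans_lt hm)]
    simp [h0, h1]
  · rcases Nat.le_one_iff_eq_zero_or_eq_one.1 hm with hm | hm
    · obtain rfl : m = 0 := (Finsupp.degree_eq_zero_iff m).1 hm
      simp
    · obtain ⟨a, rfl⟩ := (Finsupp.sum_eq_one_iff m).1 hm
      simp [Finsupp.single_left_inj, (Finsupp.single_ne_zero.2 one_ne_zero).symm]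

theorem Matrix.IsSymm.exists_congr_col_constantCoeff_eq_zero {σ k ι : Type*} [CommRing k]
    [IsDomain k] [Fintype ι] [DecidableEq ι] {M : Matrix ι ι (MvPolynomial σ k)}
    (hM : M.IsSymm) (haff : ∀ i j, (M i j).totalDegree ≤ 1)
    (hsing : (M.map constantCoeff).det = 0) :
    ∃ (A : Matrix ι ι (MvPolynomial σ k)) (c : k) (p : ι), c ≠ 0 ∧ A.IsSymm ∧
      A.det = C c * M.det ∧ (∀ i j, (A i j).totalDegree ≤ 1) ∧
      ∀ i, constantCoeff (A i p) = 0 := by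
  obtain ⟨R, p, hR, hRp⟩ := Matrix.exists_det_ne_zero_mul_apply_eq_zero hsing
  refine ⟨(R.map C)ᵀ * M * R.map C, R.det ^ 2, p, pow_ne_zero 2 hR, ?_, ?_, fun i j => ?_,
    fun i => ?_⟩
  · simp only [Matrix.IsSymm, Matrix.transpose_mul, Matrix.transpose_transpose, hM.eq,
      Matrix.mul_assoc]
  · rw [Matrix.det_mul, Matrix.det_mul, Matrix.det_transpose, ← RingHom.mapMatrix_apply,
      ← RingHom.map_det, map_pow]
    ring
  · have h := Matrix.transpose_map_mul_mul_map_apply_mem (restrictTotalDegree σ k 1) R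
      (fun i j => (mem_restrictTotalDegree _ _ _).2 (haff i j)) i j
    rwa [algebraMap_eq, mem_restrictTotalDegree] at h
  · have hmap :
        ((R.map C)ᵀ * M * R.map C).map constantCoeff = Rᵀ * M.map constantCoeff * R := by
      simp [Matrix.map_mul, Matrix.transpose_map, Matrix.map_map, Function.comp_def]
    have h : (Rᵀ * M.map constantCoeff * R) i p = 0 := by
      rw [Matrix.mul_assoc, Matrix.mul_apply]
      simp [hRp]
    exact (congrFun (congrFun hmap i) p).trans h

section varSqIdeal

variable {σ k : Type*}

noncomputable def varSqIdeal (σ k : Type*) [CommSemiring k] : Ideal (MvPolynomial σ k) :=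
  Ideal.span (Set.range fun i => X i ^ 2)

theorem constantCoeff_eq_zero_of_mem_varSqIdeal [CommSemiring k] {f : MvPolynomial σ k}
    (hf : f ∈ varSqIdeal σ k) : constantCoeff f = 0 := by
  have hle : varSqIdeal σ k ≤ RingHom.ker constantCoeff :=
    Ideal.span_le.2 (by rintro _ ⟨i, rfl⟩; simp)
  exact hle hf

instance {p : ℕ} [CommRing k] [CharP k p] : CharP (MvPolynomial σ k ⧸ varSqIdeal σ k) p :=
  CharP.quotient' p _ fun n hn => by
    have h := constantCoeff_eq_zero_of_mem_varSqIdeal hn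
    rw [map_natCast] at h
    rw [← map_natCast C, h, map_zero]

variable [CommRing k] [CharP k 2]

theorem pderiv_mem_varSqIdeal {f : MvPolynomial σ k} (hf : f ∈ varSqIdeal σ k) (i : σ) :
    pderiv i f ∈ varSqIdeal σ k := by
  induction hf using Submodule.span_induction with
  | mem g hg =>
    obtain ⟨j, rfl⟩ := hg
    show pderiv i (X j ^ 2) ∈ _
    rw [sq, pderiv_mul, mul_comm, CharTwo.add_self_eq_zero]
    exact zero_mem _
  | zero => rw [map_zero]; exact zero_mem _
  | add f g _ _ hf hg => rw [map_add]; exact add_mem hf hg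
  | smul r g hg ih =>
    rw [smul_eq_mul, pderiv_mul]
    exact add_mem (Ideal.mul_mem_left _ _ hg) (Ideal.mul_mem_left _ _ ih)

theorem sq_sub_C_constantCoeff_sq_mem_varSqIdeal (f : MvPolynomial σ k) :
    f ^ 2 - C (constantCoeff f) ^ 2 ∈ varSqIdeal σ k := by
  have hf : f - C (constantCoeff f) ∈ Ideal.span (Set.range X) := by
    rw [← Set.image_univ, mem_ideal_span_X_image]
    intro m hm
    have hm0 : m ≠ 0 := by
      rintro rfl
      simp [← constantCoeff_eq] at hm
    obtain ⟨i, hi⟩ := Finsupp.ne_iff.1 hm0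
    exact ⟨i, trivial, hi⟩
  rw [← sub_pow_expChar]
  have h := Ideal.pow_mem_span_image_pow (p := 2) hf
  rw [← Set.range_comp] at h
  exact h

theorem Matrix.IsSymm.det_sub_det_mem_varSqIdeal {ι : Type*} [Fintype ι] [DecidableEq ι]
    {A : Matrix ι ι (MvPolynomial σ k)} (hA : A.IsSymm) :
    A.det - (Matrix.of fun i j => if i = j then A i i else C (constantCoeff (A i j))).det ∈
      varSqIdeal σ k := by
  set N := Matrix.of fun i j => if i = j then A i i else C (constantCoeff (A i j))
  have hN : N.IsSymm := Matrix.IsSymm.ext fun i j => by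
    by_cases hij : i = j
    · simp [N, hij]
    · simp [N, hij, Ne.symm hij, hA.apply i j]
  rw [← Ideal.Quotient.eq, RingHom.map_det, RingHom.map_det]
  refine (hA.map _).det_eq_of_sq_eq (hN.map _) (fun i => ?_) fun i j hij => ?_
  · simp only [RingHom.mapMatrix_apply, Matrix.map_apply, N, Matrix.of_apply, if_true]
  · simp only [RingHom.mapMatrix_apply, Matrix.map_apply, N, Matrix.of_apply, if_neg hij]
    rw [← map_pow, ← map_pow, Ideal.Quotient.eq]
    exact sq_sub_C_constantCoeff_sq_mem_varSqIdeal (A i j)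

theorem Matrix.IsSymm.exists_det_sub_mul_mem_varSqIdeal {ι : Type*} [Fintype ι] [DecidableEq ι]
    {A : Matrix ι ι (MvPolynomial σ k)} (hA : A.IsSymm) {p : ι}
    (hp : ∀ i, constantCoeff (A i p) = 0) :
    ∃ K, A.det - A p p * K ∈ varSqIdeal σ k := by
  obtain ⟨K, hK⟩ := Matrix.dvd_det_of_col_eq_zero
    (N := Matrix.of fun i j => if i = j then A i i else C (constantCoeff (A i j))) (p := p)
    (fun i hi => by simp [hi, hp])
  exact ⟨K, by simpa [hK] using hA.det_sub_det_mem_varSqIdeal⟩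

end varSqIdeal

theorem eq_zero_of_C_mul_sub_mul_mem_varSqIdeal {k : Type*} [CommRing k] [IsDomain k]
    [CharP k 2] {c : k} {l K : MvPolynomial (Fin 3) k} (hl : l.totalDegree ≤ 1)
    (hl0 : constantCoeff l = 0)
    (h : C c * (X 0 * X 1 + X 2) - l * K ∈ varSqIdeal (Fin 3) k) : c = 0 := by
  rw [eq_C_add_sum_C_mul_X_of_totalDegree_le_one hl, ← constantCoeff_eq, hl0,
    Fin.sum_univ_three] at h
  set a : Fin 3 → k := fun i => coeff (Finsupp.single i 1) l
  -- The constant terms of `∂ᵢ f` and `∂₁∂₀ f` are the coefficients of `xᵢ` and `xy` in `f`,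
  -- and in characteristic 2 partial derivatives preserve `varSqIdeal`.
  have hx : a 0 * constantCoeff K = 0 := by
    simpa [pderiv_X, or_comm] using
      constantCoeff_eq_zero_of_mem_varSqIdeal (pderiv_mem_varSqIdeal h 0)
  have hy : a 1 * constantCoeff K = 0 := by
    simpa [pderiv_X, or_comm] using
      constantCoeff_eq_zero_of_mem_varSqIdeal (pderiv_mem_varSqIdeal h 1)
  have hz : c = a 2 * constantCoeff K := by
    simpa [pderiv_X, sub_eq_zero, mul_comm] using
      constantCoeff_eq_zero_of_mem_varSqIdeal (pderiv_mem_varSqIdeal h 2)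
  have hxy : c = a 0 * constantCoeff (pderiv 1 K) + a 1 * constantCoeff (pderiv 0 K) := by
    simpa [pderiv_X, sub_eq_zero, mul_comm, add_comm] using
      constantCoeff_eq_zero_of_mem_varSqIdeal
        (pderiv_mem_varSqIdeal (pderiv_mem_varSqIdeal h 0) 1)
  by_contra hc
  have hK0 : constantCoeff K ≠ 0 := fun h0 => hc (by rw [hz, h0, mul_zero])
  rw [hxy, (mul_eq_zero.1 hx).resolve_right hK0, (mul_eq_zero.1 hy).resolve_right hK0] at hc
  simp at hc

/-- Over a field of characteristic 2, no symmetric matrix of any dimension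
with affine-linear entries in the variables `x, y, z` has determinant
`xy + z`. -/
theorem no_symmetric_rep_char_two {k : Type*} [Field k] [CharP k 2] (n : ℕ)
    (M : Matrix (Fin n) (Fin n) (MvPolynomial (Fin 3) k))
    (hsymm : M.IsSymm)
    (haff : ∀ i j, (M i j).totalDegree ≤ 1) :
    M.det ≠ X 0 * X 1 + X 2 := by
  intro hdet
  have hsing : (M.map constantCoeff).det = 0 := by
    rw [← RingHom.mapMatrix_apply, ← RingHom.map_det, hdet]
    simp
  obtain ⟨A, c, p, hc, hA, hAdet, hAaff, hAcol⟩ :=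
    hsymm.exists_congr_col_constantCoeff_eq_zero haff hsing
  obtain ⟨K, hK⟩ := hA.exists_det_sub_mul_mem_varSqIdeal hAcol
  rw [hAdet, hdet] at hK
  exact hc (eq_zero_of_C_mul_sub_mul_mem_varSqIdeal (hAaff p p) (hAcol p) hK)
end

section
/- Let k be a field of characteristic 2 and let G be a finite edge-weighted undirected graph (possibly with loops) with symmetric adjacency matrix A over k. Then det(A) equals the sum of the weights of the cycle covers of G that use only cycles of length at most 2 (loops and 2-cycles), where the weight of a 2-cycle through an edge of weight w is w², and the weight of a loop is its weight. -/
/-!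
In characteristic 2 the signs in the Leibniz expansion disappear, so `det A` is the permanent
`∑ σ, ∏ i, A i (σ i)`. For symmetric `A` the term of `σ` equals the term of `σ⁻¹`, so the terms of
the permutations with `σ ≠ σ⁻¹` cancel in pairs, leaving only the involutions.
-/

open Finset Equiv

theorem sum_eq_sum_ite_mul_self_eq_one_of_charP_two {G R : Type*} [Group G] [Fintype G]
    [DecidableEq G] [Ring R] [CharP R 2] (f : G → R) (hf : ∀ g, f g⁻¹ = f g) :
    ∑ g, f g = ∑ g, if g * g = 1 then f g else 0 := by
  rw [← sum_filter, ← sum_filter_add_sum_filter_not univ (fun g => g * g = 1) f, add_eq_left]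
  refine sum_involution (fun g _ => g⁻¹) (fun g _ => by rw [hf, CharTwo.add_self_eq_zero])
    (fun g hg _ h => ?_) (fun g hg => ?_) (fun g _ => inv_inv g)
  · rw [inv_eq_iff_mul_eq_one] at h
    exact (mem_filter.1 hg).2 h
  · simpa [← mul_inv_rev] using hg

theorem Matrix.det_eq_permanent_of_charP_two {n R : Type*} [Fintype n] [DecidableEq n]
    [CommRing R] [CharP R 2] (M : Matrix n n R) : M.det = M.permanent := by
  rw [det_apply, permanent]
  refine sum_congr rfl fun σ _ => ?_
  rcases Int.units_eq_one_or (Perm.sign σ) with h | h <;> simp [h, CharTwo.neg_eq]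

theorem Matrix.IsSymm.prod_apply_perm_inv {n α : Type*} [Fintype n] [CommMonoid α]
    {A : Matrix n n α} (hA : A.IsSymm) (σ : Perm n) :
    ∏ i, A i (σ⁻¹ i) = ∏ i, A i (σ i) := by
  calc ∏ i, A i (σ⁻¹ i) = ∏ i, A (σ i) (σ⁻¹ (σ i)) := (Equiv.prod_comp σ _).symm
    _ = ∏ i, A i (σ i) := by
      simp only [Perm.coe_inv, symm_apply_apply]
      exact prod_congr rfl fun i _ => hA.apply i (σ i)

/-- Over a field of characteristic 2, the determinant of a symmetric matrix
equals the sum of the weights of the cycle covers using only cycles of length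
at most 2, i.e. the sum over involutive permutations `σ` of `∏ i, A i (σ i)`
(a fixed point contributes the loop weight `A i i` and a 2-cycle `{i,j}`
contributes `A i j * A j i = (A i j)^2`). -/
theorem det_eq_sum_short_cycle_covers {k : Type*} [Field k] [CharP k 2] {n : ℕ}
    (A : Matrix (Fin n) (Fin n) k) (hA : A.IsSymm) :
    A.det = ∑ σ : Equiv.Perm (Fin n),
      if σ * σ = 1 then ∏ i, A i (σ i) else 0 := by
  rw [A.det_eq_permanent_of_charP_two, ← Matrix.permanent_transpose]
  exact sum_eq_sum_ite_mul_self_eq_one_of_charP_two (fun σ : Perm (Fin n) => ∏ i, A i (σ i))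
    hA.prod_apply_perm_inv
end

section
/- Let M be an m×n matrix over a commutative ring and let A be the (m+n)×(m+n) block matrix [[0, M],[Mᵀ, 0]]. If m = n, then per(A) = per(M)², and if m ≠ n then per(A) = 0. -/
def permanent {α : Type*} [Fintype α] [DecidableEq α] {R : Type*} [CommRing R]
    (A : Matrix α α R) : R :=
  ∑ σ : Equiv.Perm α, ∏ i, A i (σ i)

section Aux
open Matrix Equiv

lemma permanent_transpose {α : Type*} [Fintype α] [DecidableEq α] {R : Type*} [CommRing R]
    (M : Matrix α α R) : _root_.permanent Mᵀ = _root_.permanent M := by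
  unfold _root_.permanent
  rw [← Equiv.sum_comp (Equiv.inv (Perm α))]
  refine Finset.sum_congr rfl fun σ _ => ?_
  calc ∏ i, Mᵀ i ((Equiv.inv (Perm α) σ) i)
      = ∏ i, M (σ⁻¹ i) i := by simp [Matrix.transpose_apply]
    _ = ∏ i, M (σ⁻¹ (σ i)) (σ i) := (Equiv.prod_comp σ _).symm
    _ = ∏ i, M i (σ i) := by simp

lemma key {R : Type*} [CommRing R] {m : ℕ} (M : Matrix (Fin m) (Fin m) R) :
    _root_.permanent (Matrix.fromBlocks 0 M Mᵀ 0) = _root_.permanent M ^ 2 := by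
  classical
  set A := Matrix.fromBlocks (0 : Matrix (Fin m) (Fin m) R) M Mᵀ 0 with hA
  set Φ : Perm (Fin m) × Perm (Fin m) → Perm (Fin m ⊕ Fin m) :=
    fun p => (Equiv.sumCongr p.1 p.2).trans (Equiv.sumComm _ _) with hΦ
  have hΦapp₁ : ∀ p i, Φ p (Sum.inl i) = Sum.inr (p.1 i) := fun p i => rfl
  have hΦapp₂ : ∀ p j, Φ p (Sum.inr j) = Sum.inl (p.2 j) := fun p j => rfl
  have hinj : Function.Injective Φ := by
    intro p q h
    have h1 : ∀ i, p.1 i = q.1 i := fun i => by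
      have := congrArg (fun e : Perm (Fin m ⊕ Fin m) => e (Sum.inl i)) h
      simpa [hΦapp₁] using this
    have h2 : ∀ j, p.2 j = q.2 j := fun j => by
      have := congrArg (fun e : Perm (Fin m ⊕ Fin m) => e (Sum.inr j)) h
      simpa [hΦapp₂] using this
    exact Prod.ext (Equiv.ext h1) (Equiv.ext h2)
  have hzero : ∀ σ : Perm (Fin m ⊕ Fin m), σ ∉ Finset.univ.image Φ →
      ∏ x, A x (σ x) = 0 := by
    intro σ hσ
    by_contra hne
    have hfac : ∀ x, A x (σ x) ≠ 0 := by
      intro x hx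
      exact hne (Finset.prod_eq_zero (Finset.mem_univ x) hx)
    have h1 : ∀ i : Fin m, ∃ k, σ (Sum.inl i) = Sum.inr k := by
      intro i
      rcases hh : σ (Sum.inl i) with j | k
      · exact absurd (by simp [hA, hh] : A (Sum.inl i) (σ (Sum.inl i)) = 0) (hfac _)
      · exact ⟨k, rfl⟩
    have h2 : ∀ j : Fin m, ∃ k, σ (Sum.inr j) = Sum.inl k := by
      intro j
      rcases hh : σ (Sum.inr j) with k | k
      · exact ⟨k, rfl⟩
      · exact absurd (by simp [hA, hh] : A (Sum.inr j) (σ (Sum.inr j)) = 0) (hfac _)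
    set f : Fin m → Fin m := fun i => (h1 i).choose with hf
    set g : Fin m → Fin m := fun j => (h2 j).choose with hg
    have hfspec : ∀ i, σ (Sum.inl i) = Sum.inr (f i) := fun i => (h1 i).choose_spec
    have hgspec : ∀ j, σ (Sum.inr j) = Sum.inl (g j) := fun j => (h2 j).choose_spec
    have hfinj : Function.Injective f := by
      intro a b hab
      have : σ (Sum.inl a) = σ (Sum.inl b) := by rw [hfspec, hfspec, hab]
      simpa using σ.injective this
    have hginj : Function.Injective g := by
      intro a b hab
      have : σ (Sum.inr a) = σ (Sum.inr b) := by rw [hgspec, hgspec, hab]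
      simpa using σ.injective this
    have hfbij := (Finite.injective_iff_bijective).mp hfinj
    have hgbij := (Finite.injective_iff_bijective).mp hginj
    apply hσ
    refine Finset.mem_image.mpr ⟨(Equiv.ofBijective f hfbij, Equiv.ofBijective g hgbij),
      Finset.mem_univ _, ?_⟩
    ext x
    cases x with
    | inl i => rw [hΦapp₁]; exact (hfspec i).symm
    | inr j => rw [hΦapp₂]; exact (hgspec j).symm
  have : _root_.permanent A = ∑ p : Perm (Fin m) × Perm (Fin m), ∏ x, A x (Φ p x) := by
    unfold _root_.permanent
    rw [← Finset.sum_subset (Finset.subset_univ (Finset.univ.image Φ)) (fun σ _ hσ => hzero σ hσ),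
      Finset.sum_image (fun p _ q _ h => hinj h)]
  rw [this]
  have hterm : ∀ p : Perm (Fin m) × Perm (Fin m),
      ∏ x, A x (Φ p x) = (∏ i, M i (p.1 i)) * ∏ j, Mᵀ j (p.2 j) := by
    intro p
    rw [Fintype.prod_sum_type]
    congr 1
  calc ∑ p : Perm (Fin m) × Perm (Fin m), ∏ x, A x (Φ p x)
      = ∑ p : Perm (Fin m) × Perm (Fin m), (∏ i, M i (p.1 i)) * ∏ j, Mᵀ j (p.2 j) :=
        Finset.sum_congr rfl fun p _ => hterm p
    _ = (∑ f : Perm (Fin m), ∏ i, M i (f i)) * ∑ g : Perm (Fin m), ∏ j, Mᵀ j (g j) := by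
        rw [Finset.sum_mul_sum, Fintype.sum_prod_type]
    _ = _root_.permanent M ^ 2 := by
        rw [show (∑ g : Perm (Fin m), ∏ j, Mᵀ j (g j)) = _root_.permanent Mᵀ from rfl,
          _root_.permanent_transpose, show (∑ f : Perm (Fin m), ∏ i, M i (f i)) = _root_.permanent M from rfl,
          sq]

end Aux

/-- For an `m × n` matrix `M`, the permanent of the block matrix
`[[0, M], [Mᵀ, 0]]` equals `per(M)²` if `m = n` (identifying the column index
type with the row index type), and equals `0` if `m ≠ n`. -/
theorem permanent_fromBlocks_zero_transpose {R : Type*} [CommRing R]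
    {m n : ℕ} (M : Matrix (Fin m) (Fin n) R) :
    (∀ h : m = n,
        permanent (Matrix.fromBlocks 0 M M.transpose 0) =
          permanent (M.submatrix id (finCongr h)) ^ 2) ∧
    (m ≠ n → permanent (Matrix.fromBlocks 0 M M.transpose 0) = 0) := by
  constructor
  · intro h
    subst h
    have hsub : M.submatrix id (finCongr rfl) = M := by
      ext i j; simp [finCongr]
    rw [hsub]
    exact key M
  · intro hne
    unfold permanent
    refine Finset.sum_eq_zero fun σ _ => ?_
    by_contra hne0
    have hfac : ∀ x, Matrix.fromBlocks (0 : Matrix (Fin m) (Fin m) R) M M.transpose 0 x (σ x) ≠ 0 := by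
      intro x hx
      exact hne0 (Finset.prod_eq_zero (Finset.mem_univ x) hx)
    have h1 : ∀ i : Fin m, ∃ k, σ (Sum.inl i) = Sum.inr k := by
      intro i
      rcases hh : σ (Sum.inl i) with j | k
      · exact absurd (by simp [hh] :
          Matrix.fromBlocks (0 : Matrix (Fin m) (Fin m) R) M M.transpose 0 (Sum.inl i) (σ (Sum.inl i)) = 0)
          (hfac _)
      · exact ⟨k, rfl⟩
    have h2 : ∀ j : Fin n, ∃ k, σ (Sum.inr j) = Sum.inl k := by
      intro j
      rcases hh : σ (Sum.inr j) with k | k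
      · exact ⟨k, rfl⟩
      · exact absurd (by simp [hh] :
          Matrix.fromBlocks (0 : Matrix (Fin m) (Fin m) R) M M.transpose 0 (Sum.inr j) (σ (Sum.inr j)) = 0)
          (hfac _)
    have hfinj : Function.Injective (fun i => (h1 i).choose) := by
      intro a b hab
      have : σ (Sum.inl a) = σ (Sum.inl b) := by
        rw [(h1 a).choose_spec, (h1 b).choose_spec]; exact congrArg Sum.inr hab
      simpa using σ.injective this
    have hginj : Function.Injective (fun j => (h2 j).choose) := by
      intro a b hab
      have : σ (Sum.inr a) = σ (Sum.inr b) := by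
        rw [(h2 a).choose_spec, (h2 b).choose_spec]; exact congrArg Sum.inl hab
      simpa using σ.injective this
    have hle1 : m ≤ n := by simpa using Fintype.card_le_of_injective _ hfinj
    have hle2 : n ≤ m := by simpa using Fintype.card_le_of_injective _ hginj
    exact hne (le_antisymm hle1 hle2)
end

section
/- Let k be a field of characteristic 2, B an n×n matrix over k, and A the 2n×2n symmetric block matrix [[0,B],[Bᵀ,0]]. Then det(A + I_{2n}) = (per*(B))², where per*(B) = Σ_π ∏_{i∈dom(π)} B_{i,π(i)} is the partial permanent, the sum ranging over all injective partial maps π from {1,...,n} to {1,...,n}. -/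
/-- The partial permanent of an `n × n` matrix: the sum over all injective
partial maps `π` from `{1,…,n}` to itself of `∏_{i ∈ dom π} B i (π i)`
(the empty map contributes `1`). -/
noncomputable def partialPermanent {R : Type*} [CommRing R] {n : ℕ}
    (B : Matrix (Fin n) (Fin n) R) : R :=
  ∑ S : Finset (Fin n), ∑ π : (↥S ↪ Fin n), ∏ i : ↥S, B i.1 (π i)

/-!
In characteristic 2 the determinant is the permanent, and for a symmetric matrix the terms of
`σ` and `σ⁻¹` are equal, so they cancel in pairs and only involutions survive. An involution
contributes to the permanent of `[[1, B], [Bᵀ, 1]]` only if it exchanges `inl i` with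
`inr (π i)` for some partial injection `π` and fixes everything else; its term is then
`(∏ i, B i (π i))²`. Since squaring is additive in characteristic 2, the sum of these squares
is `per*(B)²`.
-/

open Finset Matrix Equiv

theorem Matrix.IsSymm.prod_inv_apply {R ι : Type*} [CommMonoid R] [Fintype ι]
    {M : Matrix ι ι R} (hM : M.IsSymm) (σ : Perm ι) :
    ∏ i, M (σ⁻¹ i) i = ∏ i, M (σ i) i := by
  rw [← Equiv.prod_comp σ]
  refine prod_congr rfl fun i _ => ?_
  rw [Perm.inv_def, symm_apply_apply, hM.apply]

section CharTwo

variable {R ι : Type*} [CommRing R] [CharP R 2] [Fintype ι] [DecidableEq ι]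

theorem Matrix.det_eq_permanent_of_charTwo (M : Matrix ι ι R) : M.det = M.permanent := by
  rw [det_apply, permanent]
  refine sum_congr rfl fun σ _ => ?_
  rcases Int.units_eq_one_or (Perm.sign σ) with h | h <;>
    simp [h, Units.smul_def, CharTwo.neg_eq]

theorem Matrix.IsSymm.det_eq_sum_involutive_of_charTwo {M : Matrix ι ι R} (hM : M.IsSymm) :
    M.det = ∑ σ : Perm ι with σ⁻¹ = σ, ∏ i, M (σ i) i := by
  rw [det_eq_permanent_of_charTwo, permanent,
    ← sum_filter_add_sum_filter_not univ (fun σ => σ⁻¹ = σ), add_eq_left]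
  refine sum_involution (fun σ _ => σ⁻¹)
    (fun σ _ => by rw [hM.prod_inv_apply, CharTwo.add_self_eq_zero])
    (fun σ hσ _ => (mem_filter.mp hσ).2) (fun σ hσ => ?_) (fun σ _ => inv_inv σ)
  simpa [inv_eq_iff_eq_inv, eq_comm] using hσ

end CharTwo

open Function

namespace Function.Embedding

variable {ι κ : Type*} [DecidableEq ι] [DecidableEq κ] {S : Finset ι}

def partialSwapFun (π : S ↪ κ) : ι ⊕ κ → ι ⊕ κ
  | .inl i => if h : i ∈ S then .inr (π ⟨i, h⟩) else .inl i
  | .inr j => if h : j ∈ Set.range π then .inl (π.invOfMemRange ⟨j, h⟩ : ι) else .inr j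

variable (π : S ↪ κ)

@[simp] theorem partialSwapFun_inl_coe (x : S) : partialSwapFun π (.inl x) = .inr (π x) := by
  simp [partialSwapFun]

theorem partialSwapFun_inl_of_notMem {i : ι} (hi : i ∉ S) :
    partialSwapFun π (.inl i) = .inl i := by
  simp [partialSwapFun, hi]

@[simp] theorem partialSwapFun_inr_apply (x : S) : partialSwapFun π (.inr (π x)) = .inl x := by
  simp [partialSwapFun]

theorem partialSwapFun_inr_of_notMem_range {j : κ} (hj : j ∉ Set.range π) :
    partialSwapFun π (.inr j) = .inr j := by
  simp [partialSwapFun, hj]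

theorem partialSwapFun_involutive : Involutive (partialSwapFun π) := by
  rintro (i | j)
  · by_cases hi : i ∈ S
    · exact (congrArg _ (partialSwapFun_inl_coe π ⟨i, hi⟩)).trans
        (partialSwapFun_inr_apply π _)
    · rw [partialSwapFun_inl_of_notMem π hi, partialSwapFun_inl_of_notMem π hi]
  · by_cases hj : j ∈ Set.range π
    · obtain ⟨x, rfl⟩ := hj
      simp
    · rw [partialSwapFun_inr_of_notMem_range π hj, partialSwapFun_inr_of_notMem_range π hj]

theorem isRight_partialSwapFun_inl_iff {i : ι} :
    (partialSwapFun π (.inl i)).isRight ↔ i ∈ S := by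
  by_cases hi : i ∈ S
  · rw [show Sum.inl i = Sum.inl (⟨i, hi⟩ : S).1 from rfl, partialSwapFun_inl_coe]
    simp [hi]
  · simp [partialSwapFun_inl_of_notMem π hi, hi]

def partialSwap : Perm (ι ⊕ κ) := (partialSwapFun_involutive π).toPerm _

@[simp] theorem coe_partialSwap : ⇑π.partialSwap = partialSwapFun π := rfl

theorem partialSwap_inv : π.partialSwap⁻¹ = π.partialSwap := Involutive.toPerm_symm _

theorem prod_fromBlocks_partialSwap {R : Type*} [CommMonoidWithZero R] [Fintype ι] [Fintype κ]
    (B : Matrix ι κ R) :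
    ∏ u, fromBlocks 1 B Bᵀ 1 (π.partialSwap u) u = (∏ x : S, B x (π x)) ^ 2 := by
  rw [Fintype.prod_sum_type, sq]
  congr 1
  · refine (Fintype.prod_of_injective Subtype.val Subtype.val_injective _ _
      (fun i hi => ?_) (fun x => ?_)).symm
    · rw [coe_partialSwap, partialSwapFun_inl_of_notMem π (by simpa using hi)]
      simp
    · simp
  · refine (Fintype.prod_of_injective π π.injective _ _ (fun j hj => ?_) (fun x => ?_)).symm
    · rw [coe_partialSwap, partialSwapFun_inr_of_notMem_range π hj]
      simp
    · simp

theorem partialSwap_injective :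
    Injective fun p : Σ S : Finset ι, S ↪ κ => p.2.partialSwap := by
  rintro ⟨S, π⟩ ⟨S', π'⟩ h
  replace h : partialSwapFun π = partialSwapFun π' := congrArg DFunLike.coe h
  obtain rfl : S = S' := by
    ext i
    rw [← isRight_partialSwapFun_inl_iff π, ← isRight_partialSwapFun_inl_iff π', h]
  congr
  ext x
  simpa using congrFun h (.inl x)

end Function.Embedding

open Function.Embedding in
theorem Equiv.Perm.exists_partialSwap_eq {ι κ : Type*} [Fintype ι] [DecidableEq ι]
    [DecidableEq κ] {σ : Perm (ι ⊕ κ)} (hσ : σ⁻¹ = σ)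
    (hl : ∀ i i', σ (.inl i) = .inl i' → i' = i)
    (hr : ∀ j j', σ (.inr j) = .inr j' → j' = j) :
    ∃ p : Σ S : Finset ι, S ↪ κ, p.2.partialSwap = σ := by
  have hσσ (u : ι ⊕ κ) : σ (σ u) = u := (Perm.inv_eq_iff_eq.mp (by rw [hσ])).symm
  let S : Finset ι := {i | (σ (.inl i)).isRight}
  let π : S ↪ κ :=
    ⟨fun x => (σ (.inl x)).getRight (mem_filter.mp x.2).2, fun x y hxy => by
      have := congrArg (Sum.inr : κ → ι ⊕ κ) hxy
      simp only [Sum.inr_getRight] at this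
      exact Subtype.ext (Sum.inl_injective (σ.injective this))⟩
  have hπ (x : S) : σ (.inl x) = .inr (π x) := (Sum.inr_getRight _ _).symm
  refine ⟨⟨S, π⟩, Equiv.ext fun u => ?_⟩
  rw [coe_partialSwap]
  rcases u with i | j
  · by_cases hi : i ∈ S
    · exact (partialSwapFun_inl_coe π ⟨i, hi⟩).trans (hπ _).symm
    · rw [partialSwapFun_inl_of_notMem π hi]
      rcases h : σ (.inl i) with i' | j
      · rw [hl i i' h]
      · exact absurd (by simp [S, h]) hi
  · by_cases hj : j ∈ Set.range π
    · obtain ⟨x, rfl⟩ := hj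
      rw [partialSwapFun_inr_apply, ← hπ, hσσ]
    · rw [partialSwapFun_inr_of_notMem_range π hj]
      rcases h : σ (.inr j) with i | j'
      · have hij : σ (.inl i) = .inr j := by rw [← h, hσσ]
        have hi : i ∈ S := by simp [S, hij]
        exact absurd ⟨⟨i, hi⟩, Sum.inr_injective ((hπ _).symm.trans hij)⟩ hj
      · rw [hr j j' h]

theorem Matrix.det_fromBlocks_one_transpose_one_of_charTwo {R ι κ : Type*} [CommRing R]
    [CharP R 2] [Fintype ι] [DecidableEq ι] [Fintype κ] [DecidableEq κ] (B : Matrix ι κ R) :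
    (fromBlocks 1 B Bᵀ 1).det =
      ∑ p : Σ S : Finset ι, S ↪ κ, (∏ x : p.1, B x (p.2 x)) ^ 2 := by
  rw [IsSymm.det_eq_sum_involutive_of_charTwo (isSymm_one.fromBlocks rfl isSymm_one)]
  symm
  refine sum_bij_ne_zero (fun p _ _ => p.2.partialSwap)
    (fun p _ _ => mem_filter.mpr ⟨mem_univ _, p.2.partialSwap_inv⟩)
    (fun p _ _ q _ _ h => Embedding.partialSwap_injective h) (fun σ hσ hne => ?_)
    (fun p _ _ => (p.2.prod_fromBlocks_partialSwap B).symm)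
  have hentry (u : ι ⊕ κ) : fromBlocks 1 B Bᵀ 1 (σ u) u ≠ 0 :=
    fun h => hne (prod_eq_zero (mem_univ u) h)
  obtain ⟨p, rfl⟩ := Perm.exists_partialSwap_eq (mem_filter.mp hσ).2
    (fun i i' h => by_contra fun hi => hentry (.inl i) (by simp [h, one_apply_ne hi]))
    (fun j j' h => by_contra fun hj => hentry (.inr j) (by simp [h, one_apply_ne hj]))
  exact ⟨p, mem_univ _, by rwa [← p.2.prod_fromBlocks_partialSwap], rfl⟩

/-- Over a field of characteristic 2, for an `n × n` matrix `B` and the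
symmetric block matrix `A = [[0, B], [Bᵀ, 0]]`, one has
`det (A + I) = (per* B)²`. -/
theorem det_add_one_eq_partialPermanent_sq {k : Type*} [Field k] [CharP k 2]
    {n : ℕ} (B : Matrix (Fin n) (Fin n) k) :
    (Matrix.fromBlocks 0 B B.transpose 0 + 1).det = partialPermanent B ^ 2 := by
  rw [← fromBlocks_one, fromBlocks_add, zero_add, add_zero, add_zero,
    det_fromBlocks_one_transpose_one_of_charTwo, partialPermanent, Fintype.sum_sigma]
  simp only [CharTwo.sum_sq]
end

section
/- Over any field, for a 2n×2n matrix A of the symmetric block form [[0,B],[Bᵀ,0]], the polynomial identity per(A + t·I_{2n}) = Σ_{k=0}^{2n} c_k t^{2n-k} holds, where c_k is the sum of the permanents of all k×k central (principal) minors of A. Moreover every nonzero permanent of a central minor of A equals per(M)² for some square submatrix M of B. -/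
/-!
Expanding `∏ i, (A i (σ i) + t δ_{i, σ i})` and collecting terms by the set `S` of indices at
which the entry of `A` is chosen, only the permutations fixing `Sᶜ` pointwise survive, and they
contribute the permanent of the principal minor on `S` times `t ^ (2n - |S|)`.

A permutation of `S ⊆ m ⊕ n` contributes to the principal minor of `[[0, B], [Bᵀ, 0]]` only if it
exchanges `I = S ∩ m` and `J = S ∩ n`, i.e. it is a pair of bijections `I ≃ J`, `J ≃ I`; hence
that minor's permanent factors as `per B[I,J] · per B[I,J]ᵀ = (per B[I,J])²`, and it vanishes
unless `|I| = |J|`.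
-/

/-- The permanent of the principal (central) minor of `A` on the index set
`S`: the sum over bijections `e : S ≃ S` of `∏_{i ∈ S} A i (e i)`
(`S = ∅` contributes `1`; `S = univ` gives the full permanent). -/
noncomputable def principalMinorPermanent {α : Type*} [Fintype α] [DecidableEq α]
    {R : Type*} [CommRing R] (A : Matrix α α R) (S : Finset α) : R :=
  ∑ e : (↥S ≃ ↥S), ∏ i : ↥S, A i.1 (e i).1

open Finset Sum

namespace Equiv

variable {α β γ δ : Type*}

theorem sumCongr_injective :
    Function.Injective (fun p : (α ≃ β) × (γ ≃ δ) => sumCongr p.1 p.2) := by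
  rintro ⟨e, f⟩ ⟨e', f'⟩ h
  have h' := DFunLike.congr_fun h
  simp only [sumCongr_apply, Sum.forall, Sum.map_inl, Sum.map_inr, inl.injEq, inr.injEq] at h'
  ext : 2
  exacts [h'.1 _, h'.2 _]

theorem exists_sumCongr_eq (σ : α ⊕ γ ≃ β ⊕ δ) (hl : ∀ a, (σ (inl a)).isLeft)
    (hr : ∀ c, (σ (inr c)).isRight) : ∃ e f, sumCongr e f = σ := by
  have hσ : ∀ x, x.isLeft ↔ (σ x).isLeft := by
    rintro (a | c)
    · simp [hl a]
    · simpa using hr c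
  refine ⟨sumIsLeft.symm.trans ((σ.subtypeEquiv hσ).trans sumIsLeft),
    sumIsRight.symm.trans ((σ.subtypeEquiv fun x => ?_).trans sumIsRight), ?_⟩
  · simpa only [Sum.not_isLeft] using (hσ x).not
  · ext (a | c) <;> simp

end Equiv

namespace Matrix

variable {m n m' n' o p R : Type*} [Fintype m] [DecidableEq m] [Fintype n] [DecidableEq n]
  [Fintype m'] [DecidableEq m'] [Fintype n'] [DecidableEq n']
  [Fintype o] [DecidableEq o] [Fintype p] [DecidableEq p] [CommSemiring R]

/-- For `m = n` this is `Matrix.permanent` of the transpose; it vanishes unless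
`card m = card n`. -/
def equivPermanent (C : Matrix m n R) : R :=
  ∑ e : m ≃ n, ∏ i, C i (e i)

theorem equivPermanent_submatrix (C : Matrix m n R) (e : m' ≃ m) (f : n' ≃ n) :
    (C.submatrix e f).equivPermanent = C.equivPermanent := by
  refine Fintype.sum_equiv (e.equivCongr f) _ _ fun g => ?_
  exact Fintype.prod_equiv e _ _ fun i => by simp [Equiv.equivCongr_apply_apply]

theorem equivPermanent_transpose (C : Matrix m n R) : Cᵀ.equivPermanent = C.equivPermanent := by
  refine Fintype.sum_equiv (Equiv.symmEquiv n m) _ _ fun e => ?_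
  exact (Fintype.prod_equiv e.symm _ _ fun j => by simp).symm

theorem card_eq_of_equivPermanent_ne_zero {C : Matrix m n R} (h : C.equivPermanent ≠ 0) :
    Fintype.card m = Fintype.card n := by
  by_contra hcard
  have : IsEmpty (m ≃ n) := ⟨fun e => hcard (Fintype.card_congr e)⟩
  exact h (by simp [equivPermanent])

theorem equivPermanent_fromBlocks_zero₁₂_zero₂₁ (C : Matrix m n R) (D : Matrix o p R) :
    (fromBlocks C 0 0 D).equivPermanent = C.equivPermanent * D.equivPermanent := by
  simp only [equivPermanent, Fintype.sum_mul_sum, ← Fintype.sum_prod_type']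
  refine (Fintype.sum_of_injective _ Equiv.sumCongr_injective _ _ (fun σ hσ => ?_)
    fun ef => ?_).symm
  · by_contra hne
    have hσ_ne : ∀ x, fromBlocks C 0 0 D x (σ x) ≠ 0 := fun x hx =>
      hne (prod_eq_zero (mem_univ x) hx)
    obtain ⟨e, f, rfl⟩ := Equiv.exists_sumCongr_eq σ
      (fun a => Sum.not_isRight.mp fun h => by
        obtain ⟨d, hd⟩ := Sum.isRight_iff.mp h
        exact hσ_ne (inl a) (by simp [hd]))
      (fun c => Sum.not_isLeft.mp fun h => by
        obtain ⟨b, hb⟩ := Sum.isLeft_iff.mp h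
        exact hσ_ne (inr c) (by simp [hb]))
    exact hσ ⟨(e, f), rfl⟩
  · simp [Fintype.prod_sum_type]

theorem equivPermanent_fromBlocks_zero₁₁_zero₂₂ (C : Matrix m n R) (D : Matrix o p R) :
    (fromBlocks 0 C D 0).equivPermanent = C.equivPermanent * D.equivPermanent := by
  rw [← equivPermanent_fromBlocks_zero₁₂_zero₂₁,
    ← equivPermanent_submatrix _ (Equiv.refl _) (Equiv.sumComm p n)]
  congr
  ext (i | i) (j | j) <;> rfl

theorem equivPermanent_fromBlocks_zero_transpose (C : Matrix m n R) :
    (fromBlocks 0 C Cᵀ 0).equivPermanent = C.equivPermanent ^ 2 := by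
  rw [equivPermanent_fromBlocks_zero₁₁_zero₂₂, equivPermanent_transpose, sq]

theorem equivPermanent_map {S : Type*} [CommSemiring S] (C : Matrix m n R) (f : R →+* S) :
    (C.map f).equivPermanent = f C.equivPermanent := by
  simp [equivPermanent, map_sum, map_prod]

end Matrix

open Matrix Equiv

section PrincipalMinor

variable {α R : Type*} [Fintype α] [DecidableEq α] [CommRing R]

theorem principalMinorPermanent_eq_equivPermanent (A : Matrix α α R) (S : Finset α) :
    principalMinorPermanent A S = (A.submatrix (↑) (↑) : Matrix S S R).equivPermanent :=
  rfl

theorem principalMinorPermanent_univ (A : Matrix α α R) :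
    principalMinorPermanent A univ = A.equivPermanent :=
  equivPermanent_submatrix A (subtypeUnivEquiv mem_univ) (subtypeUnivEquiv mem_univ)

theorem principalMinorPermanent_map {R' : Type*} [CommRing R'] (A : Matrix α α R) (f : R →+* R')
    (S : Finset α) : principalMinorPermanent (A.map f) S = f (principalMinorPermanent A S) :=
  equivPermanent_map (A.submatrix (↑) (↑) : Matrix S S R) f

theorem sum_perm_fixing_compl_eq_principalMinorPermanent (A : Matrix α α R) (S : Finset α) :
    ∑ σ : Perm α with ∀ i ∈ Sᶜ, i = σ i, ∏ i ∈ S, A i (σ i) = principalMinorPermanent A S := by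
  rw [sum_subtype _ (p := fun σ : Perm α => ∀ a, a ∉ S → σ a = a) fun σ => by simp [eq_comm]]
  refine (Fintype.sum_equiv (Perm.subtypeEquivSubtypePerm (· ∈ S)) _ _ fun e => ?_).symm
  rw [← prod_coe_sort S]
  exact prod_congr rfl fun i _ => by rw [Perm.subtypeEquivSubtypePerm_apply_of_mem e i.2]

theorem equivPermanent_add_diagonal (A : Matrix α α R) (d : α → R) :
    (A + diagonal d).equivPermanent = ∑ S, principalMinorPermanent A S * ∏ i ∈ Sᶜ, d i := by
  simp only [equivPermanent, Matrix.add_apply, Fintype.prod_add]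
  rw [sum_comm]
  refine sum_congr rfl fun S _ => ?_
  simp only [diagonal_apply, prod_ite_zero, mul_ite, mul_zero, sum_ite, sum_const_zero, add_zero,
    ← sum_mul, sum_perm_fixing_compl_eq_principalMinorPermanent]

theorem principalMinorPermanent_fromBlocks_zero_transpose {m n : Type*} [Fintype m]
    [DecidableEq m] [Fintype n] [DecidableEq n] (B : Matrix m n R) (S : Finset (m ⊕ n)) :
    principalMinorPermanent (fromBlocks 0 B Bᵀ 0) S =
      (B.submatrix (↑) (↑) : Matrix S.toLeft S.toRight R).equivPermanent ^ 2 := by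
  let ψ : S.toLeft ⊕ S.toRight ≃ S :=
    (sumCongr (subtypeEquivRight fun _ => mem_toLeft)
      (subtypeEquivRight fun _ => mem_toRight)).trans subtypeSum.symm
  rw [principalMinorPermanent_eq_equivPermanent, ← equivPermanent_submatrix _ ψ ψ,
    ← equivPermanent_fromBlocks_zero_transpose]
  congr 1
  ext (i | i) (j | j) <;> rfl

end PrincipalMinor

/-- Over any field, for the `2n × 2n` symmetric block matrix
`A = [[0,B],[Bᵀ,0]]`, the polynomial identity
`per(A + t·I) = ∑_{k=0}^{2n} c_k t^{2n-k}` holds, where `c_k` is the sum of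
the permanents of all `k × k` central minors of `A`; moreover every nonzero
permanent of a central minor of `A` equals `per(M)²` for some square
submatrix `M = B[I,J]` of `B`. -/
theorem permanent_add_scalar_expansion {k : Type*} [Field k] {n : ℕ}
    (B : Matrix (Fin n) (Fin n) k) :
    (principalMinorPermanent
        ((Matrix.fromBlocks 0 B B.transpose 0).map Polynomial.C
          + (Polynomial.X : Polynomial k) • (1 : Matrix (Fin n ⊕ Fin n) (Fin n ⊕ Fin n) (Polynomial k)))
        Finset.univ =
      ∑ j ∈ Finset.range (2 * n + 1),
        Polynomial.C (∑ S ∈ Finset.univ.filter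
            (fun S : Finset (Fin n ⊕ Fin n) => S.card = j),
          principalMinorPermanent (Matrix.fromBlocks 0 B B.transpose 0) S)
          * Polynomial.X ^ (2 * n - j)) ∧
    (∀ S : Finset (Fin n ⊕ Fin n),
      principalMinorPermanent (Matrix.fromBlocks 0 B B.transpose 0) S ≠ 0 →
      ∃ I J : Finset (Fin n), I.card = J.card ∧
        principalMinorPermanent (Matrix.fromBlocks 0 B B.transpose 0) S =
          (∑ e : (↥I ≃ ↥J), ∏ i : ↥I, B i.1 (e i).1) ^ 2) := by
  have hcard : Fintype.card (Fin n ⊕ Fin n) = 2 * n := by simp [two_mul]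
  refine ⟨?_, fun S hS => ⟨S.toLeft, S.toRight, ?_,
    principalMinorPermanent_fromBlocks_zero_transpose B S⟩⟩
  · simp_rw [univ_filter_card_eq]
    rw [principalMinorPermanent_univ, smul_one_eq_diagonal, equivPermanent_add_diagonal,
      ← powerset_univ, sum_powerset, card_univ, hcard]
    refine sum_congr rfl fun j _ => ?_
    rw [map_sum, sum_mul]
    refine sum_congr rfl fun S hS => ?_
    rw [principalMinorPermanent_map, prod_const, card_compl, hcard, mem_powersetCard_univ.mp hS]
  · rw [principalMinorPermanent_fromBlocks_zero_transpose] at hS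
    simpa only [Fintype.card_coe] using
      card_eq_of_equivPermanent_ne_zero (ne_zero_pow two_ne_zero hS)
end

section
/- The parity of the number of partial matchings of a bipartite graph G (with parts of size n each) equals det(A + I_{2n}) over the field F₂, where A is the 0/1 adjacency matrix of G; hence the parity of the number of partial matchings of a bipartite graph can be computed in polynomial time. -/
open Finset Equiv Matrix Sum

section Aux

variable {R : Type*} [CommRing R]

/-- Over `ZMod 2` the determinant is the permanent-style sum over permutations. -/
lemma zmod2_det_eq_sum_perm {ι : Type*} [DecidableEq ι] [Fintype ι]
    (M : Matrix ι ι (ZMod 2)) :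
    M.det = ∑ σ : Equiv.Perm ι, ∏ i, M (σ i) i := by
  rw [Matrix.det_apply]
  refine Finset.sum_congr rfl fun σ _ => ?_
  rcases Int.units_eq_one_or (Equiv.Perm.sign σ) with h | h <;>
    simp [h, Units.smul_def, CharTwo.neg_eq]

/-- Principal "permanent-minor" expansion of `1 + M`. -/
lemma sum_perm_one_add {ι : Type*} [DecidableEq ι] [Fintype ι] (M : Matrix ι ι R) :
    ∑ σ : Equiv.Perm ι, ∏ i, (1 + M) (σ i) i
      = ∑ T : Finset ι, ∑ π : Equiv.Perm ↥T, ∏ x : ↥T, M (π x : ι) (x : ι) := by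
  have key : ∀ σ : Equiv.Perm ι, ∏ i, (1 + M) (σ i) i
      = ∑ T : Finset ι, (∏ i ∈ T, M (σ i) i) *
          ∏ i ∈ univ \ T, (if σ i = i then (1 : R) else 0) := by
    intro σ
    rw [← Finset.powerset_univ, ← Finset.prod_add]
    refine Finset.prod_congr rfl fun i _ => ?_
    simp [Matrix.add_apply, Matrix.one_apply, add_comm, eq_comm]
  simp only [key]
  rw [Finset.sum_comm]
  refine Finset.sum_congr rfl fun T _ => ?_
  have h1 : ∀ σ : Equiv.Perm ι,
      (∏ i ∈ T, M (σ i) i) * ∏ i ∈ univ \ T, (if σ i = i then (1 : R) else 0)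
        = if (∀ a, ¬ a ∈ T → σ a = a) then ∏ i ∈ T, M (σ i) i else 0 := by
    intro σ
    rw [Finset.prod_boole, mul_ite, mul_one, mul_zero]
    congr 1
    simp [Finset.mem_sdiff]
  simp only [h1]
  rw [← Finset.sum_filter]
  rw [Finset.sum_subtype (p := fun σ : Equiv.Perm ι => ∀ a, ¬ a ∈ T → σ a = a)
    (Finset.univ.filter fun σ : Equiv.Perm ι => ∀ a, ¬ a ∈ T → σ a = a)
    (by simp) (fun σ => ∏ i ∈ T, M (σ i) i)]
  rw [← Fintype.sum_equiv (Equiv.Perm.subtypeEquivSubtypePerm (fun a => a ∈ T))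
    (fun π => ∏ x : ↥T, M (π x : ι) (x : ι))
    (fun σ => ∏ i ∈ T, M ((σ : Equiv.Perm ι) i) i) ?_]
  intro π
  show (∏ x : ↥T, M (π x : ι) (x : ι)) = ∏ i ∈ T, M (Equiv.Perm.ofSubtype π i) i
  rw [← Finset.prod_coe_sort T (fun i => M ((Equiv.Perm.ofSubtype π) i) i)]
  refine Finset.prod_congr rfl fun x _ => ?_
  congr 1
  exact (Equiv.Perm.ofSubtype_apply_coe π x).symm

end Aux

variable {R : Type*} [CommRing R]

lemma sum_perm_sum_type {γ δ : Type*} [Fintype γ] [Fintype δ] [DecidableEq γ] [DecidableEq δ]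
    (A : Matrix (γ ⊕ δ) (γ ⊕ δ) R)
    (hl : ∀ i i', A (inl i) (inl i') = 0) (hr : ∀ j j', A (inr j) (inr j') = 0) :
    ∑ π : Equiv.Perm (γ ⊕ δ), ∏ x, A (π x) x
      = (∑ e : γ ≃ δ, ∏ i, A (inr (e i)) (inl i)) * ∑ f : δ ≃ γ, ∏ j, A (inl (f j)) (inr j) := by
  classical
  set F : (γ ≃ δ) × (δ ≃ γ) → Equiv.Perm (γ ⊕ δ) :=
    fun p => (Equiv.sumCongr p.1 p.2).trans (Equiv.sumComm δ γ) with hF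
  have hFinjOn : Set.InjOn F (Finset.univ : Finset ((γ ≃ δ) × (δ ≃ γ))) := by
    intro p _ q _ h
    have h1 : p.1 = q.1 := by
      ext i
      have := congrArg (fun π : Equiv.Perm (γ ⊕ δ) => π (inl i)) h
      simpa [hF] using this
    have h2 : p.2 = q.2 := by
      ext j
      have := congrArg (fun π : Equiv.Perm (γ ⊕ δ) => π (inr j)) h
      simpa [hF] using this
    exact Prod.ext h1 h2
  have himage : (Finset.univ.filter
      (fun π : Equiv.Perm (γ ⊕ δ) => ∀ x, (π x).isLeft = x.isRight))
      = Finset.univ.image F := by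
    ext π
    simp only [Finset.mem_filter, Finset.mem_univ, true_and, Finset.mem_image]
    constructor
    · intro hg
      have hsymm : ∀ x : γ ⊕ δ, ((π.symm x).isLeft) = x.isRight := by
        intro x
        have h := hg (π.symm x)
        rw [Equiv.apply_symm_apply] at h
        cases hy : (Equiv.symm π) x <;> rw [hy] at h <;> cases x <;> simp_all
      have hil : ∀ i : γ, (π (inl i)).isRight := by
        intro i; have := hg (inl i); simpa using (by
          cases h : π (inl i) <;> simp [h] at this ⊢)
      have hir : ∀ j : δ, (π (inr j)).isLeft := by
        intro j; have := hg (inr j); cases h : π (inr j) <;> simp [h] at this ⊢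
      have hsl : ∀ j : δ, (π.symm (inr j)).isLeft := by
        intro j; have := hsymm (inr j); cases h : π.symm (inr j) <;> simp [h] at this ⊢
      have hsr : ∀ i : γ, (π.symm (inl i)).isRight := by
        intro i; have := hsymm (inl i); cases h : π.symm (inl i) <;> simp [h] at this ⊢
      refine ⟨(⟨⟨fun i => (π (inl i)).getRight (hil i),
                 fun j => (π.symm (inr j)).getLeft (hsl j), ?_, ?_⟩,
               ⟨fun j => (π (inr j)).getLeft (hir j),
                 fun i => (π.symm (inl i)).getRight (hsr i), ?_, ?_⟩⟩), ?_⟩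
      · intro i
        apply Sum.inl_injective
        rw [Sum.inl_getLeft, Sum.inr_getRight, Equiv.symm_apply_apply]
      · intro j
        apply Sum.inr_injective
        rw [Sum.inr_getRight, Sum.inl_getLeft, Equiv.apply_symm_apply]
      · intro j
        apply Sum.inr_injective
        rw [Sum.inr_getRight, Sum.inl_getLeft, Equiv.symm_apply_apply]
      · intro i
        apply Sum.inl_injective
        rw [Sum.inl_getLeft, Sum.inr_getRight, Equiv.apply_symm_apply]
      · ext x
        cases x with
        | inl i => simp [hF]
        | inr j => simp [hF]
    · rintro ⟨p, _, rfl⟩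
      intro x
      cases x <;> simp [hF]
  have hzero : ∀ π : Equiv.Perm (γ ⊕ δ),
      ¬ (∀ x, (π x).isLeft = x.isRight) → ∏ x, A (π x) x = 0 := by
    intro π hπ
    push_neg at hπ
    obtain ⟨x, hx⟩ := hπ
    refine Finset.prod_eq_zero (Finset.mem_univ x) ?_
    cases hx2 : x with
    | inl i =>
      cases h : π (inl i) with
      | inl i' => exact hl _ _
      | inr j => exfalso; apply hx; rw [hx2, h]; rfl
    | inr j =>
      cases h : π (inr j) with
      | inl i => exfalso; apply hx; rw [hx2, h]; rfl
      | inr j' => exact hr _ _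
  calc ∑ π : Equiv.Perm (γ ⊕ δ), ∏ x, A (π x) x
      = ∑ π ∈ Finset.univ.filter
          (fun π : Equiv.Perm (γ ⊕ δ) => ∀ x, (π x).isLeft = x.isRight),
          ∏ x, A (π x) x := by
        refine (Finset.sum_subset (Finset.filter_subset _ _) ?_).symm
        intro π _ hπ
        refine hzero π ?_
        intro hgood
        exact hπ (by simpa using hgood)
    _ = ∑ p ∈ (Finset.univ : Finset ((γ ≃ δ) × (δ ≃ γ))).image F, ∏ x, A (p x) x := by
        rw [himage]
    _ = ∑ p : (γ ≃ δ) × (δ ≃ γ), ∏ x, A (F p x) x := by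
        rw [Finset.sum_image (fun p hp q hq h => hFinjOn hp hq h)]
    _ = ∑ e : γ ≃ δ, ∑ f : δ ≃ γ,
          (∏ i, A (inr (e i)) (inl i)) * ∏ j, A (inl (f j)) (inr j) := by
        rw [Fintype.sum_prod_type]
        refine Finset.sum_congr rfl fun e _ => Finset.sum_congr rfl fun f _ => ?_
        rw [Fintype.prod_sum_type]
        congr 1
    _ = (∑ e : γ ≃ δ, ∏ i, A (inr (e i)) (inl i)) * ∑ f : δ ≃ γ, ∏ j, A (inl (f j)) (inr j) := by
        rw [Fintype.sum_mul_sum]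

section Main

/-- Pairs of finsets correspond to finsets of a sum type. -/
def finsetSumEquiv {α β : Type*} : Finset α × Finset β ≃ Finset (α ⊕ β) where
  toFun p := p.1.disjSum p.2
  invFun T := (T.toLeft, T.toRight)
  left_inv p := by simp
  right_inv T := Finset.toLeft_disjSum_toRight

/-- The coercion equivalence for `Finset.disjSum`. -/
def disjSumCoeEquiv {α β : Type*} (I : Finset α) (J : Finset β) :
    ↥I ⊕ ↥J ≃ ↥(I.disjSum J) where
  toFun := Sum.elim (fun i => ⟨inl i.1, by simp [i.2]⟩) (fun j => ⟨inr j.1, by simp [j.2]⟩)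
  invFun := fun x => match x with
    | ⟨inl a, h⟩ => inl ⟨a, by simpa using h⟩
    | ⟨inr b, h⟩ => inr ⟨b, by simpa using h⟩
  left_inv := by rintro (i | j) <;> rfl
  right_inv := by rintro ⟨a | b, h⟩ <;> rfl

lemma disjSumCoeEquiv_coe {α β : Type*} (I : Finset α) (J : Finset β) (y : ↥I ⊕ ↥J) :
    ((disjSumCoeEquiv I J y : α ⊕ β)) = Sum.map Subtype.val Subtype.val y := by
  rcases y with i | j <;> rfl

end Main

/-- The number of partial matchings of the bipartite graph with 0/1
biadjacency matrix `B₀` (computed over `ℤ` as the sum over subsets `I`, `J`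
of the permanents of `B₀[I,J]`, the empty matching contributing `1`) has the
same parity as `det(A + I)` over `F₂`, where `A = [[0,B],[Bᵀ,0]]` is the
adjacency matrix of the graph reduced mod 2. -/
theorem parity_partial_matchings_eq_det {n : ℕ}
    (B₀ : Matrix (Fin n) (Fin n) ℤ) (h01 : ∀ i j, B₀ i j = 0 ∨ B₀ i j = 1) :
    ((∑ I : Finset (Fin n), ∑ J : Finset (Fin n),
        ∑ e : (↥I ≃ ↥J), ∏ i : ↥I, B₀ i.1 (e i).1 : ℤ) : ZMod 2) =
      (Matrix.fromBlocks 0 (B₀.map (Int.cast : ℤ → ZMod 2))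
          (B₀.map (Int.cast : ℤ → ZMod 2)).transpose 0 + 1).det := by
  classical
  set B : Matrix (Fin n) (Fin n) (ZMod 2) := B₀.map (Int.cast : ℤ → ZMod 2) with hB
  set A : Matrix (Fin n ⊕ Fin n) (Fin n ⊕ Fin n) (ZMod 2) :=
    Matrix.fromBlocks 0 B Bᵀ 0 with hA
  have sq : ∀ x : ZMod 2, x * x = x := by decide
  have hmain : (A + 1).det
      = ∑ I : Finset (Fin n), ∑ J : Finset (Fin n),
          ∑ e : (↥I ≃ ↥J), ∏ i : ↥I, B i.1 (e i).1 := by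
    rw [add_comm, zmod2_det_eq_sum_perm, sum_perm_one_add]
    rw [← Equiv.sum_comp (finsetSumEquiv (α := Fin n) (β := Fin n))
      (fun T => ∑ π : Equiv.Perm ↥T, ∏ x : ↥T, A (π x : Fin n ⊕ Fin n) (x : Fin n ⊕ Fin n))]
    rw [Fintype.sum_prod_type]
    refine Finset.sum_congr rfl fun I _ => Finset.sum_congr rfl fun J _ => ?_
    show ∑ π : Equiv.Perm ↥(I.disjSum J), ∏ x : ↥(I.disjSum J),
        A (π x : Fin n ⊕ Fin n) (x : Fin n ⊕ Fin n)
      = ∑ e : (↥I ≃ ↥J), ∏ i : ↥I, B i.1 (e i).1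
    set c : ↥I ⊕ ↥J → Fin n ⊕ Fin n := Sum.map Subtype.val Subtype.val with hc
    have step1 : ∑ π : Equiv.Perm ↥(I.disjSum J), ∏ x : ↥(I.disjSum J),
        A (π x : Fin n ⊕ Fin n) (x : Fin n ⊕ Fin n)
        = ∑ ρ : Equiv.Perm (↥I ⊕ ↥J), ∏ y, (A.submatrix c c) (ρ y) y := by
      refine (Fintype.sum_equiv ((disjSumCoeEquiv I J).permCongr) _ _ ?_).symm
      intro ρ
      rw [← Equiv.prod_comp (disjSumCoeEquiv I J)
        (fun x => A ((((disjSumCoeEquiv I J).permCongr ρ) x : ↥(I.disjSum J)) : Fin n ⊕ Fin n)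
          ((x : ↥(I.disjSum J)) : Fin n ⊕ Fin n))]
      refine Finset.prod_congr rfl fun y _ => ?_
      rw [Equiv.permCongr_apply, Equiv.symm_apply_apply, disjSumCoeEquiv_coe, disjSumCoeEquiv_coe]
      rfl
    rw [step1, sum_perm_sum_type (A.submatrix c c)
      (fun i i' => by simp [hc, hA, Matrix.submatrix_apply])
      (fun j j' => by simp [hc, hA, Matrix.submatrix_apply])]
    have e21 : ∀ (e : ↥I ≃ ↥J) (i : ↥I), (A.submatrix c c) (inr (e i)) (inl i) = B i.1 (e i).1 := by
      intro e i
      simp [hc, hA, Matrix.submatrix_apply]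
    have e12 : ∀ (f : ↥J ≃ ↥I) (j : ↥J), (A.submatrix c c) (inl (f j)) (inr j) = B (f j).1 j.1 := by
      intro f j
      simp [hc, hA, Matrix.submatrix_apply]
    simp only [e21, e12]
    have hsecond : (∑ f : ↥J ≃ ↥I, ∏ j : ↥J, B (f j).1 j.1)
        = ∑ e : (↥I ≃ ↥J), ∏ i : ↥I, B i.1 (e i).1 := by
      refine Fintype.sum_equiv ⟨Equiv.symm, Equiv.symm, fun f => by simp, fun e => by simp⟩ _ _ ?_
      intro f
      show (∏ j : ↥J, B (f j).1 j.1) = ∏ i : ↥I, B i.1 (f.symm i).1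
      rw [← Equiv.prod_comp f (fun i : ↥I => B i.1 ((f.symm i) : ↥J).1)]
      refine Finset.prod_congr rfl fun j _ => ?_
      simp
    rw [hsecond]
    exact sq _
  rw [← hA] at *
  rw [hmain]
  push_cast
  rfl
end
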